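/- If u : ℝ⁴ → ℝ is a C² solution of the ultrahyperbolic equation u_{X₁X₁} + u_{X₂X₂} - u_{X₃X₃} - u_{X₄X₄} = 0, then for all a,b,c,d ∈ ℝ and r > 0, the mean value property ∫₀^{2π} u(a + r cos θ, b + r sin θ, c, d) dθ = ∫₀^{2π} u(a, b, c + r cos θ, d + r sin θ) dθ holds. -/

import Mathlib

/-!
Fix `x = (a, b, c, d)` and let `K(ρ, σ)` be the integral over `θ, φ ∈ [0, 2π]` of
`u (x + ρ (cos θ, sin θ, 0, 0) + σ (0, 0, cos φ, sin φ))`. Differentiating under the integral sign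
and integrating by parts along either circle gives Darboux's identities
`ρ K_ρρ + K_ρ = ρ ∬ (u_{X₁X₁} + u_{X₂X₂})` and `σ K_σσ + K_σ = σ ∬ (u_{X₃X₃} + u_{X₄X₄})`, so the
ultrahyperbolic equation turns `K` into a solution of the Euler–Poisson–Darboux equation
`K_ρρ + K_ρ / ρ = K_σσ + K_σ / σ`. So does `K₀`, built in the same way from two circles of the
`(X₁, X₂)`-plane, and `K - K₀` vanishes together with its `σ`-derivative on `σ = 0`.
An energy argument shows that `D = K - K₀` vanishes on the whole quadrant: the energy
`∫₀^{R-σ} ρ (D_ρ² + D_σ²) / 2 dρ` of the slices of the triangle `ρ + σ ≤ R` does not increase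
with `σ`. At `ρ = 0` this is the theorem, as `K(0, r)` and `K₀(0, r)` are `2π` times the two
circle integrals.
-/

open MeasureTheory Set Filter Function Real
open scoped Topology

noncomputable section

namespace Asgeirsson

section Leibniz

variable {G : Type*} [NormedAddCommGroup G] [NormedSpace ℝ G]

theorem hasFDerivAt_setIntegral_of_continuous {H Z : Type*}
    [NormedAddCommGroup H] [NormedSpace ℝ H] [ProperSpace H]
    [TopologicalSpace Z] [T2Space Z] [MeasurableSpace Z] [OpensMeasurableSpace Z]
    {μ : Measure Z} [IsFiniteMeasureOnCompacts μ] {S : Set Z} (hS : IsCompact S)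
    {Φ : H → Z → G} {Φ' : H → Z → H →L[ℝ] G} (hΦ : Continuous ↿Φ) (hΦ' : Continuous ↿Φ')
    (hd : ∀ q z, HasFDerivAt (Φ · z) (Φ' q z) q) (q₀ : H) :
    HasFDerivAt (fun q => ∫ z in S, Φ q z ∂μ) (∫ z in S, Φ' q₀ z ∂μ) q₀ := by
  obtain ⟨C, hC⟩ := ((isCompact_closedBall q₀ 1).prod hS).exists_bound_of_continuousOn
    hΦ'.continuousOn
  have hΦq (q : H) : Continuous (Φ q) := hΦ.comp (continuous_const.prodMk continuous_id)
  have hΦ'q (q : H) : Continuous (Φ' q) := hΦ'.comp (continuous_const.prodMk continuous_id)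
  refine hasFDerivAt_integral_of_dominated_of_fderiv_le (bound := fun _ => C)
    (Metric.ball_mem_nhds q₀ one_pos) (.of_forall fun q => ?_)
    ((hΦq q₀).continuousOn.integrableOn_compact hS)
    ((hΦ'q q₀).continuousOn.aestronglyMeasurable_of_isCompact hS hS.measurableSet)
    (ae_restrict_of_forall_mem hS.measurableSet fun z hz q hq =>
      hC (q, z) ⟨Metric.ball_subset_closedBall hq, hz⟩)
    (integrableOn_const hS.measure_lt_top.ne) (.of_forall fun z q _ => hd q z)
  exact (hΦq q).continuousOn.aestronglyMeasurable_of_isCompact hS hS.measurableSet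

theorem hasDerivAt_intervalIntegral_of_continuous {F F' : ℝ × ℝ → G}
    (hF : Continuous F) (hF' : Continuous F')
    (hd : ∀ ρ σ, HasDerivAt (fun σ => F (ρ, σ)) (F' (ρ, σ)) σ) (a b σ₀ : ℝ) :
    HasDerivAt (fun σ => ∫ ρ in a..b, F (ρ, σ)) (∫ ρ in a..b, F' (ρ, σ₀)) σ₀ := by
  obtain ⟨C, hC⟩ := ((isCompact_closedBall σ₀ 1).prod isCompact_uIcc).exists_bound_of_continuousOn
    (hF'.comp continuous_swap).continuousOn
  have hslice {Ψ : ℝ × ℝ → G} (hΨ : Continuous Ψ) (σ : ℝ) : Continuous fun ρ => Ψ (ρ, σ) :=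
    hΨ.comp (continuous_id.prodMk continuous_const)
  exact (intervalIntegral.hasDerivAt_integral_of_dominated_loc_of_deriv_le (bound := fun _ => C)
    (Metric.ball_mem_nhds σ₀ one_pos) (.of_forall fun σ => (hslice hF σ).aestronglyMeasurable)
    ((hslice hF σ₀).intervalIntegrable _ _) (hslice hF' σ₀).aestronglyMeasurable
    (.of_forall fun ρ hρ σ hσ =>
      hC (σ, ρ) ⟨Metric.ball_subset_closedBall hσ, uIoc_subset_uIcc hρ⟩)
    intervalIntegrable_const (.of_forall fun ρ _ σ _ => hd ρ σ)).2

theorem hasDerivAt_intervalIntegral_upper_of_continuous [CompleteSpace G] {F F' : ℝ × ℝ → G}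
    (hF : Continuous F) (hF' : Continuous F')
    (hd : ∀ ρ σ, HasDerivAt (fun σ => F (ρ, σ)) (F' (ρ, σ)) σ) (a : ℝ) {b : ℝ → ℝ} {b' σ₀ : ℝ}
    (hb : HasDerivAt b b' σ₀) :
    HasDerivAt (fun σ => ∫ ρ in a..b σ, F (ρ, σ))
      (b' • F (b σ₀, σ₀) + ∫ ρ in a..b σ₀, F' (ρ, σ₀)) σ₀ := by
  set W : ℝ → ℝ → G := fun t σ => ∫ ρ in a..t, F (ρ, σ)
  have hW : HasStrictFDerivAt ↿W (((1 : ℝ →L[ℝ] ℝ).smulRight (F (b σ₀, σ₀))).coprod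
      ((1 : ℝ →L[ℝ] ℝ).smulRight (∫ ρ in a..b σ₀, F' (ρ, σ₀)))) (b σ₀, σ₀) := by
    refine hasStrictFDerivAt_uncurry_coprod (f := W) (u := (b σ₀, σ₀))
      (f₁ := fun t σ => (1 : ℝ →L[ℝ] ℝ).smulRight (F (t, σ)))
      (f₂ := fun t σ => (1 : ℝ →L[ℝ] ℝ).smulRight (∫ ρ in a..t, F' (ρ, σ)))
      (.of_forall fun v => ?_) (.of_forall fun v => ?_) ?_ ?_
    · have hF_slice : Continuous fun ρ => F (ρ, v.2) := by fun_prop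
      exact (intervalIntegral.integral_hasDerivAt_right (hF_slice.intervalIntegrable _ _)
        (hF_slice.stronglyMeasurableAtFilter _ _) hF_slice.continuousAt).hasFDerivAt
    · exact (hasDerivAt_intervalIntegral_of_continuous hF hF' hd a v.1 v.2).hasFDerivAt
    · exact ((ContinuousLinearMap.smulRightL ℝ ℝ G 1).continuous.comp hF).continuousAt
    · exact ((ContinuousLinearMap.smulRightL ℝ ℝ G 1).continuous.comp
        (intervalIntegral.continuous_parametric_intervalIntegral_of_continuous
          (μ := volume) (f := fun p ρ => F' (ρ, p.2)) (by fun_prop) continuous_fst)).continuousAt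
  have := HasFDerivAt.comp_hasDerivAt (f := fun σ => (b σ, σ)) σ₀ hW.hasFDerivAt
    (hb.prodMk (hasDerivAt_id σ₀))
  simp only [ContinuousLinearMap.coprod_apply, ContinuousLinearMap.smulRight_apply,
    one_apply_eq_self, one_smul] at this
  exact this

end Leibniz

section SecondDerivative

variable {E F : Type*} [NormedAddCommGroup E] [NormedSpace ℝ E] [NormedAddCommGroup F]
  [NormedSpace ℝ F]

theorem fderiv_fderiv_apply {f : E → F} {x : E} (hf : DifferentiableAt ℝ (fderiv ℝ f) x) (v w : E) :
    fderiv ℝ (fun x => fderiv ℝ f x v) x w = fderiv ℝ (fderiv ℝ f) x w v := by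
  rw [(hf.hasFDerivAt.clm_apply (hasFDerivAt_const v x)).fderiv]
  simp

theorem deriv_deriv_comp_eq_fderiv_fderiv {U : E → F} (hU : ContDiff ℝ 2 U) {ι : ℝ → E} {v : E}
    (hι : ∀ t, HasDerivAt ι v t) (t : ℝ) :
    deriv (fun t => deriv (fun s => U (ι s)) t) t = fderiv ℝ (fderiv ℝ U) (ι t) v v := by
  have hfirst : (fun t => deriv (fun s => U (ι s)) t) = fun t => fderiv ℝ U (ι t) v :=
    funext fun t => ((hU.differentiable two_ne_zero _).hasFDerivAt.comp_hasDerivAt t (hι t)).deriv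
  rw [hfirst]
  exact ((((hU.fderiv_right (m := 1) (by norm_num)).differentiable one_ne_zero
    _).hasFDerivAt.comp_hasDerivAt t (hι t)).clm_apply (hasDerivAt_const t v)).deriv.trans
    (by simp)

end SecondDerivative

def partialFst (D : ℝ × ℝ → ℝ) (q : ℝ × ℝ) : ℝ := fderiv ℝ D q (1, 0)

def partialSnd (D : ℝ × ℝ → ℝ) (q : ℝ × ℝ) : ℝ := fderiv ℝ D q (0, 1)

local notation "∂₁" => partialFst
local notation "∂₂" => partialSnd

section PlanePartials

variable {D D₀ : ℝ × ℝ → ℝ}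

theorem hasDerivAt_partialFst (hD : Differentiable ℝ D) (ρ σ : ℝ) :
    HasDerivAt (fun ρ => D (ρ, σ)) (∂₁ D (ρ, σ)) ρ :=
  (hD _).hasFDerivAt.comp_hasDerivAt ρ ((hasDerivAt_id ρ).prodMk (hasDerivAt_const ρ σ))

theorem hasDerivAt_partialSnd (hD : Differentiable ℝ D) (ρ σ : ℝ) :
    HasDerivAt (fun σ => D (ρ, σ)) (∂₂ D (ρ, σ)) σ :=
  (hD _).hasFDerivAt.comp_hasDerivAt σ ((hasDerivAt_const σ ρ).prodMk (hasDerivAt_id σ))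

theorem contDiff_partialFst {n : WithTop ℕ∞} (hD : ContDiff ℝ (n + 1) D) : ContDiff ℝ n (∂₁ D) :=
  (hD.fderiv_right le_rfl).clm_apply contDiff_const

theorem contDiff_partialSnd {n : WithTop ℕ∞} (hD : ContDiff ℝ (n + 1) D) : ContDiff ℝ n (∂₂ D) :=
  (hD.fderiv_right le_rfl).clm_apply contDiff_const

theorem partialFst_sub (hD : Differentiable ℝ D) (hD₀ : Differentiable ℝ D₀) :
    ∂₁ (D - D₀) = ∂₁ D - ∂₁ D₀ := by
  funext q
  simp [partialFst, fderiv_sub (hD q) (hD₀ q)]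

theorem partialSnd_sub (hD : Differentiable ℝ D) (hD₀ : Differentiable ℝ D₀) :
    ∂₂ (D - D₀) = ∂₂ D - ∂₂ D₀ := by
  funext q
  simp [partialSnd, fderiv_sub (hD q) (hD₀ q)]

theorem partialFst_partialSnd (hD : ContDiff ℝ 2 D) : ∂₁ (∂₂ D) = ∂₂ (∂₁ D) := by
  have hD' : Differentiable ℝ (fderiv ℝ D) := (hD.fderiv_right le_rfl).differentiable one_ne_zero
  funext q
  change fderiv ℝ (fun q => fderiv ℝ D q (0, 1)) q (1, 0) =
    fderiv ℝ (fun q => fderiv ℝ D q (1, 0)) q (0, 1)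
  rw [fderiv_fderiv_apply (hD' q), fderiv_fderiv_apply (hD' q)]
  exact hD.contDiffAt.isSymmSndFDerivAt (by simp) _ _

end PlanePartials

section EulerPoissonDarboux

/-- `D_ρρ + D_ρ / ρ = D_σσ + D_σ / σ` on the open quadrant, multiplied through by `ρ σ`. -/
def SolvesEulerPoissonDarboux (D : ℝ × ℝ → ℝ) : Prop :=
  ∀ ρ σ, 0 < ρ → 0 < σ →
    σ * ∂₁ D (ρ, σ) + ρ * σ * ∂₁ (∂₁ D) (ρ, σ) = ρ * ∂₂ D (ρ, σ) + ρ * σ * ∂₂ (∂₂ D) (ρ, σ)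

variable {D D₀ : ℝ × ℝ → ℝ}

theorem SolvesEulerPoissonDarboux.sub (hD : ContDiff ℝ 2 D) (hD₀ : ContDiff ℝ 2 D₀)
    (h : SolvesEulerPoissonDarboux D) (h₀ : SolvesEulerPoissonDarboux D₀) :
    SolvesEulerPoissonDarboux (D - D₀) := by
  have hdiff {D : ℝ × ℝ → ℝ} (hD : ContDiff ℝ 2 D) :
      Differentiable ℝ (∂₁ D) ∧ Differentiable ℝ (∂₂ D) :=
    ⟨(contDiff_partialFst (n := 1) hD).differentiable one_ne_zero,
      (contDiff_partialSnd (n := 1) hD).differentiable one_ne_zero⟩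
  intro ρ σ hρ hσ
  rw [partialFst_sub (hD.differentiable two_ne_zero) (hD₀.differentiable two_ne_zero),
    partialSnd_sub (hD.differentiable two_ne_zero) (hD₀.differentiable two_ne_zero),
    partialFst_sub (hdiff hD).1 (hdiff hD₀).1, partialSnd_sub (hdiff hD).2 (hdiff hD₀).2]
  simp only [Pi.sub_apply]
  linear_combination h ρ σ hρ hσ - h₀ ρ σ hρ hσ

def energyDensity (D : ℝ × ℝ → ℝ) (q : ℝ × ℝ) : ℝ := q.1 * (∂₁ D q ^ 2 + ∂₂ D q ^ 2) / 2

def energy (D : ℝ × ℝ → ℝ) (R σ : ℝ) : ℝ := ∫ ρ in 0..R - σ, energyDensity D (ρ, σ)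

theorem continuous_energyDensity (hD : ContDiff ℝ 2 D) : Continuous (energyDensity D) := by
  have h₁ := (contDiff_partialFst (n := 1) hD).continuous
  have h₂ := (contDiff_partialSnd (n := 1) hD).continuous
  unfold energyDensity
  fun_prop

theorem hasDerivAt_energyDensity_snd (hD : ContDiff ℝ 2 D) (ρ σ : ℝ) :
    HasDerivAt (fun σ => energyDensity D (ρ, σ))
      (ρ * (∂₁ D (ρ, σ) * ∂₂ (∂₁ D) (ρ, σ) + ∂₂ D (ρ, σ) * ∂₂ (∂₂ D) (ρ, σ))) σ := by
  have h₁ := hasDerivAt_partialSnd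
    ((contDiff_partialFst (n := 1) hD).differentiable one_ne_zero) ρ σ
  have h₂ := hasDerivAt_partialSnd
    ((contDiff_partialSnd (n := 1) hD).differentiable one_ne_zero) ρ σ
  exact ((((h₁.pow 2).add (h₂.pow 2)).const_mul ρ).div_const 2).congr_deriv (by push_cast; ring)

theorem hasDerivAt_mul_partialFst_mul_partialSnd (hD : ContDiff ℝ 2 D) (ρ σ : ℝ) :
    HasDerivAt (fun ρ => ρ * (∂₁ D (ρ, σ) * ∂₂ D (ρ, σ)))
      (∂₁ D (ρ, σ) * ∂₂ D (ρ, σ) +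
        ρ * (∂₁ (∂₁ D) (ρ, σ) * ∂₂ D (ρ, σ) + ∂₁ D (ρ, σ) * ∂₂ (∂₁ D) (ρ, σ))) ρ := by
  have h₁ := hasDerivAt_partialFst
    ((contDiff_partialFst (n := 1) hD).differentiable one_ne_zero) ρ σ
  have h₂ := hasDerivAt_partialFst
    ((contDiff_partialSnd (n := 1) hD).differentiable one_ne_zero) ρ σ
  rw [partialFst_partialSnd hD] at h₂
  exact ((hasDerivAt_id ρ).mul (h₁.mul h₂)).congr_deriv (by simp)

theorem hasDerivAt_energy (hD : ContDiff ℝ 2 D) (R σ : ℝ) :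
    HasDerivAt (energy D R) (-energyDensity D (R - σ, σ) + ∫ ρ in 0..R - σ,
      ρ * (∂₁ D (ρ, σ) * ∂₂ (∂₁ D) (ρ, σ) + ∂₂ D (ρ, σ) * ∂₂ (∂₂ D) (ρ, σ))) σ := by
  have hD₁ := contDiff_partialFst (n := 1) hD
  have hD₂ := contDiff_partialSnd (n := 1) hD
  have c₁ := hD₁.continuous
  have c₂ := hD₂.continuous
  have c₂₁ := (contDiff_partialSnd (n := 0) hD₁).continuous
  have c₂₂ := (contDiff_partialSnd (n := 0) hD₂).continuous
  have := hasDerivAt_intervalIntegral_upper_of_continuous (continuous_energyDensity hD)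
    (F' := fun q => q.1 * (∂₁ D q * ∂₂ (∂₁ D) q + ∂₂ D q * ∂₂ (∂₂ D) q)) (by fun_prop)
    (hasDerivAt_energyDensity_snd hD) 0 ((hasDerivAt_id σ).const_sub R)
  simp only [neg_one_smul] at this
  exact this

theorem deriv_energy_nonpos (hD : ContDiff ℝ 2 D) (hEPD : SolvesEulerPoissonDarboux D)
    {R σ : ℝ} (hσ : 0 < σ) (hσR : σ < R) : deriv (energy D R) σ ≤ 0 := by
  have hD₁ := contDiff_partialFst (n := 1) hD
  have hD₂ := contDiff_partialSnd (n := 1) hD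
  have c₁ := hD₁.continuous
  have c₂ := hD₂.continuous
  have c₁₁ := (contDiff_partialFst (n := 0) hD₁).continuous
  have c₂₁ := (contDiff_partialSnd (n := 0) hD₁).continuous
  have c₂₂ := (contDiff_partialSnd (n := 0) hD₂).continuous
  have ha : 0 ≤ R - σ := by linarith
  have hflux := intervalIntegral.integral_eq_sub_of_hasDerivAt (a := 0) (b := R - σ)
    (fun ρ _ => hasDerivAt_mul_partialFst_mul_partialSnd hD ρ σ)
    (by apply Continuous.intervalIntegrable; fun_prop)
  -- By the equation, `∂_σ` of the energy density is `∂_ρ (ρ D_ρ D_σ) - ρ D_σ² / σ`, so the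
  -- derivative of the energy is at most `-(R - σ) (D_ρ - D_σ)² / 2`, taken at `(R - σ, σ)`.
  have hle := intervalIntegral.integral_mono_on_of_le_Ioo (μ := volume) ha
    (f := fun ρ => ρ * (∂₁ D (ρ, σ) * ∂₂ (∂₁ D) (ρ, σ) + ∂₂ D (ρ, σ) * ∂₂ (∂₂ D) (ρ, σ)))
    (g := fun ρ => ∂₁ D (ρ, σ) * ∂₂ D (ρ, σ) +
      ρ * (∂₁ (∂₁ D) (ρ, σ) * ∂₂ D (ρ, σ) + ∂₁ D (ρ, σ) * ∂₂ (∂₁ D) (ρ, σ)))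
    (by apply Continuous.intervalIntegrable; fun_prop)
    (by apply Continuous.intervalIntegrable; fun_prop) fun ρ hρ => by
      have hgap : σ * ((∂₁ D (ρ, σ) * ∂₂ D (ρ, σ) +
          ρ * (∂₁ (∂₁ D) (ρ, σ) * ∂₂ D (ρ, σ) + ∂₁ D (ρ, σ) * ∂₂ (∂₁ D) (ρ, σ))) -
          ρ * (∂₁ D (ρ, σ) * ∂₂ (∂₁ D) (ρ, σ) + ∂₂ D (ρ, σ) * ∂₂ (∂₂ D) (ρ, σ))) =
          ρ * ∂₂ D (ρ, σ) ^ 2 := by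
        linear_combination ∂₂ D (ρ, σ) * hEPD ρ σ hρ.1 hσ
      have hnonneg : 0 ≤ ρ * ∂₂ D (ρ, σ) ^ 2 := by have := hρ.1; positivity
      rw [← hgap] at hnonneg
      linarith [nonneg_of_mul_nonneg_right hnonneg hσ]
  rw [hflux] at hle
  rw [(hasDerivAt_energy hD R σ).deriv]
  simp only [energyDensity, zero_mul] at hle ⊢
  nlinarith [mul_nonneg ha (sq_nonneg (∂₁ D (R - σ, σ) - ∂₂ D (R - σ, σ)))]

theorem energy_eq_zero (hD : ContDiff ℝ 2 D) (hEPD : SolvesEulerPoissonDarboux D)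
    (hD₀ : ∀ ρ, D (ρ, 0) = 0) (hD₀' : ∀ ρ, ∂₂ D (ρ, 0) = 0) {R σ : ℝ} (hσ : 0 ≤ σ)
    (hσR : σ ≤ R) : energy D R σ = 0 := by
  have hinit : energy D R 0 = 0 := by
    have hD₀'' (ρ : ℝ) : ∂₁ D (ρ, 0) = 0 :=
      (hasDerivAt_partialFst (hD.differentiable two_ne_zero) ρ 0).unique
        (by simpa only [hD₀] using hasDerivAt_const ρ (0 : ℝ))
    simp [energy, energyDensity, hD₀', hD₀'']
  have hnonneg : 0 ≤ energy D R σ :=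
    intervalIntegral.integral_nonneg (by linarith) fun ρ hρ => by
      have := hρ.1
      unfold energyDensity
      positivity
  have hanti : AntitoneOn (energy D R) (Icc 0 R) :=
    antitoneOn_of_deriv_nonpos (convex_Icc 0 R)
      (fun σ _ => (hasDerivAt_energy hD R σ).continuousAt.continuousWithinAt)
      (fun σ _ => (hasDerivAt_energy hD R σ).differentiableAt.differentiableWithinAt)
      fun σ hσ => by
        rw [interior_Icc] at hσ
        exact deriv_energy_nonpos hD hEPD hσ.1 hσ.2
  exact le_antisymm ((hanti ⟨le_rfl, hσ.trans hσR⟩ ⟨hσ, hσR⟩ hσ).trans_eq hinit) hnonneg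

theorem energyDensity_eq_zero (hD : ContDiff ℝ 2 D) (hEPD : SolvesEulerPoissonDarboux D)
    (hD₀ : ∀ ρ, D (ρ, 0) = 0) (hD₀' : ∀ ρ, ∂₂ D (ρ, 0) = 0) {ρ σ : ℝ} (hρ : 0 < ρ)
    (hσ : 0 ≤ σ) : energyDensity D (ρ, σ) = 0 := by
  have hslice : Continuous fun ρ => energyDensity D (ρ, σ) :=
    (continuous_energyDensity hD).comp (continuous_id.prodMk continuous_const)
  have hprimitive (τ : ℝ) (hτ : 0 < τ) : ∫ ρ in 0..τ, energyDensity D (ρ, σ) = 0 := by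
    simpa [energy] using energy_eq_zero hD hEPD hD₀ hD₀' hσ (le_add_of_nonneg_right hτ.le)
  refine (intervalIntegral.integral_hasDerivAt_right (a := 0) (hslice.intervalIntegrable _ _)
    (hslice.stronglyMeasurableAtFilter _ _) hslice.continuousAt).unique
    ((hasDerivAt_const ρ (0 : ℝ)).congr_of_eventuallyEq ?_)
  filter_upwards [Ioi_mem_nhds hρ] with τ hτ using hprimitive τ hτ

theorem eqOn_zero_of_solvesEulerPoissonDarboux (hD : ContDiff ℝ 2 D)
    (hEPD : SolvesEulerPoissonDarboux D) (hD₀ : ∀ ρ, D (ρ, 0) = 0)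
    (hD₀' : ∀ ρ, ∂₂ D (ρ, 0) = 0) : EqOn D 0 (Ici 0 ×ˢ Ici 0) := by
  have hsnd {ρ σ : ℝ} (hρ : 0 < ρ) (hσ : 0 ≤ σ) : ∂₂ D (ρ, σ) = 0 := by
    have hsum : ∂₁ D (ρ, σ) ^ 2 + ∂₂ D (ρ, σ) ^ 2 = 0 := by
      simpa [energyDensity, hρ.ne'] using energyDensity_eq_zero hD hEPD hD₀ hD₀' hρ hσ
    exact pow_eq_zero_iff two_ne_zero |>.1 (by nlinarith [sq_nonneg (∂₁ D (ρ, σ))])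
  have hpos : EqOn D 0 (Ioi 0 ×ˢ Ici 0) := by
    rintro ⟨ρ, σ⟩ ⟨hρ, hσ⟩
    have hconst := constant_of_has_deriv_right_zero (f := fun σ => D (ρ, σ)) (a := 0) (b := σ)
      (hD.continuous.comp (continuous_const.prodMk continuous_id)).continuousOn
      (fun s hs => by
        simpa [hsnd hρ hs.1] using
          (hasDerivAt_partialSnd (hD.differentiable two_ne_zero) ρ s).hasDerivWithinAt)
      σ ⟨hσ, le_rfl⟩
    simpa [hD₀] using hconst
  refine hpos.of_subset_closure hD.continuous.continuousOn continuousOn_const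
    (prod_mono Ioi_subset_Ici_self le_rfl) ?_
  rw [closure_prod_eq, closure_Ioi, closure_Ici]

end EulerPoissonDarboux

section AffineFamily

variable {H Z E G : Type*} [NormedAddCommGroup H] [NormedSpace ℝ H] [TopologicalSpace Z]
  [NormedAddCommGroup E] [NormedSpace ℝ E] [NormedAddCommGroup G] [NormedSpace ℝ G]
  {g : E → G} {L : Z → H →L[ℝ] E}

theorem continuous_fderiv_fderiv_bilinearComp (hg : ContDiff ℝ 2 g) (hL : Continuous L) (x : E) :
    Continuous fun p : H × Z =>
      (fderiv ℝ (fderiv ℝ g) (x + L p.2 p.1)).bilinearComp (L p.2) (L p.2) := by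
  have hg'' : Continuous (fderiv ℝ (fderiv ℝ g)) :=
    (hg.fderiv_right (m := 1) (by norm_num)).continuous_fderiv one_ne_zero
  have hLs : Continuous fun p : H × Z => L p.2 := hL.comp continuous_snd
  have hB : Continuous fun p : H × Z => fderiv ℝ (fderiv ℝ g) (x + L p.2 p.1) :=
    hg''.comp (continuous_const.add (hLs.clm_apply continuous_fst))
  have hflip : Continuous fun p : H × Z =>
      ((fderiv ℝ (fderiv ℝ g) (x + L p.2 p.1)).comp (L p.2)).flip :=
    (ContinuousLinearMap.flipₗᵢ ℝ H E G).continuous.comp (hB.clm_comp hLs)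
  exact (ContinuousLinearMap.flipₗᵢ ℝ H H G).continuous.comp (hflip.clm_comp hLs)

variable [T2Space Z] [MeasurableSpace Z] [OpensMeasurableSpace Z]
  {μ : Measure Z} [IsFiniteMeasureOnCompacts μ] {S : Set Z}

theorem setIntegral_apply_of_continuous {F : Type*} [NormedAddCommGroup F] [NormedSpace ℝ F]
    (hS : IsCompact S) {φ : Z → H →L[ℝ] F} (hφ : Continuous φ) (v : H) :
    (∫ z in S, φ z ∂μ) v = ∫ z in S, φ z v ∂μ :=
  ContinuousLinearMap.integral_apply (hφ.continuousOn.integrableOn_compact hS) v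

variable [ProperSpace H]

theorem hasFDerivAt_setIntegral_comp_add (hS : IsCompact S) (hg : ContDiff ℝ 1 g)
    (hL : Continuous L) (x : E) (q : H) :
    HasFDerivAt (fun q => ∫ z in S, g (x + L z q) ∂μ)
      (∫ z in S, (fderiv ℝ g (x + L z q)).comp (L z) ∂μ) q := by
  have hP : Continuous fun p : H × Z => x + L p.2 p.1 :=
    continuous_const.add ((hL.comp continuous_snd).clm_apply continuous_fst)
  refine hasFDerivAt_setIntegral_of_continuous (Φ := fun q z => g (x + L z q))
    (Φ' := fun q z => (fderiv ℝ g (x + L z q)).comp (L z)) hS (hg.continuous.comp hP)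
    (((hg.continuous_fderiv one_ne_zero).comp hP).clm_comp (hL.comp continuous_snd))
    (fun q z => ?_) q
  exact (hg.differentiable one_ne_zero _).hasFDerivAt.comp q ((L z).hasFDerivAt.const_add x)

theorem hasFDerivAt_setIntegral_fderiv_comp_add (hS : IsCompact S) (hg : ContDiff ℝ 2 g)
    (hL : Continuous L) (x : E) (q : H) :
    HasFDerivAt (fun q => ∫ z in S, (fderiv ℝ g (x + L z q)).comp (L z) ∂μ)
      (∫ z in S, (fderiv ℝ (fderiv ℝ g) (x + L z q)).bilinearComp (L z) (L z) ∂μ) q := by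
  have hP : Continuous fun p : H × Z => x + L p.2 p.1 :=
    continuous_const.add ((hL.comp continuous_snd).clm_apply continuous_fst)
  have hg' : ContDiff ℝ 1 (fderiv ℝ g) := hg.fderiv_right (by norm_num)
  refine hasFDerivAt_setIntegral_of_continuous
    (Φ := fun q z => (fderiv ℝ g (x + L z q)).comp (L z))
    (Φ' := fun q z => (fderiv ℝ (fderiv ℝ g) (x + L z q)).bilinearComp (L z) (L z)) hS
    ((hg'.continuous.comp hP).clm_comp (hL.comp continuous_snd))
    (continuous_fderiv_fderiv_bilinearComp hg hL x) (fun q z => ?_) q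
  refine (((hg'.differentiable one_ne_zero _).hasFDerivAt.comp q
    ((L z).hasFDerivAt.const_add x)).clm_comp (hasFDerivAt_const (L z) q)).congr_fderiv ?_
  ext h k
  simp

theorem contDiff_setIntegral_comp_add [SecondCountableTopology Z] [WeaklyLocallyCompactSpace Z]
    (hS : IsCompact S) (hg : ContDiff ℝ 2 g) (hL : Continuous L) (x : E) :
    ContDiff ℝ 2 (fun q => ∫ z in S, g (x + L z q) ∂μ) := by
  rw [show (2 : WithTop ℕ∞) = (1 : ℕ) + 1 from rfl, contDiff_succ_iff_hasFDerivAt]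
  refine ⟨_, ?_, hasFDerivAt_setIntegral_comp_add hS (hg.of_le one_le_two) hL x⟩
  rw [show ((1 : ℕ) : WithTop ℕ∞) = (0 : ℕ) + 1 from rfl, contDiff_succ_iff_hasFDerivAt]
  refine ⟨_, ?_, hasFDerivAt_setIntegral_fderiv_comp_add hS hg hL x⟩
  rw [Nat.cast_zero, contDiff_zero]
  exact continuous_parametric_integral_of_continuous
    (continuous_fderiv_fderiv_bilinearComp hg hL x) hS

theorem fderiv_setIntegral_comp_add_apply (hS : IsCompact S) (hg : ContDiff ℝ 1 g)
    (hL : Continuous L) (x : E) (q h : H) :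
    fderiv ℝ (fun q => ∫ z in S, g (x + L z q) ∂μ) q h =
      ∫ z in S, fderiv ℝ g (x + L z q) (L z h) ∂μ := by
  have hcont : Continuous fun z => (fderiv ℝ g (x + L z q)).comp (L z) :=
    ((hg.continuous_fderiv one_ne_zero).comp
      (continuous_const.add (hL.clm_apply continuous_const))).clm_comp hL
  rw [(hasFDerivAt_setIntegral_comp_add hS hg hL x q).fderiv,
    setIntegral_apply_of_continuous hS hcont]
  rfl

theorem fderiv_fderiv_setIntegral_comp_add_apply (hS : IsCompact S) (hg : ContDiff ℝ 2 g)
    (hL : Continuous L) (x : E) (q h k : H) :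
    fderiv ℝ (fderiv ℝ (fun q => ∫ z in S, g (x + L z q) ∂μ)) q h k =
      ∫ z in S, fderiv ℝ (fderiv ℝ g) (x + L z q) (L z h) (L z k) ∂μ := by
  have hfderiv : fderiv ℝ (fun q => ∫ z in S, g (x + L z q) ∂μ) =
      fun q => ∫ z in S, (fderiv ℝ g (x + L z q)).comp (L z) ∂μ :=
    funext fun q => (hasFDerivAt_setIntegral_comp_add hS (hg.of_le one_le_two) hL x q).fderiv
  have hcont : Continuous fun z =>
      ((fderiv ℝ (fderiv ℝ g) (x + L z q)).bilinearComp (L z) (L z) : H →L[ℝ] H →L[ℝ] G) :=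
    Continuous.comp (g := fun p : H × Z =>
      ((fderiv ℝ (fderiv ℝ g) (x + L p.2 p.1)).bilinearComp (L p.2) (L p.2) : H →L[ℝ] H →L[ℝ] G))
      (f := fun z : Z => (q, z)) (continuous_fderiv_fderiv_bilinearComp hg hL x)
      (continuous_const.prodMk continuous_id)
  rw [hfderiv, (hasFDerivAt_setIntegral_fderiv_comp_add hS hg hL x q).fderiv,
    setIntegral_apply_of_continuous hS hcont,
    setIntegral_apply_of_continuous hS (hcont.clm_apply continuous_const)]
  rfl

end AffineFamily

section Ellipse

variable {E : Type*} [NormedAddCommGroup E] [NormedSpace ℝ E]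

def ellipseMap (v : E × E) (θ : ℝ) : E := cos θ • v.1 + sin θ • v.2

def planeLaplacian (U : E → ℝ) (v : E × E) (p : E) : ℝ :=
  fderiv ℝ (fderiv ℝ U) p v.1 v.1 + fderiv ℝ (fderiv ℝ U) p v.2 v.2

@[fun_prop]
theorem continuous_ellipseMap (v : E × E) : Continuous (ellipseMap v) := by
  unfold ellipseMap
  fun_prop

theorem continuous_planeLaplacian {U : E → ℝ} (hU : ContDiff ℝ 2 U) (v : E × E) :
    Continuous (planeLaplacian U v) := by
  have hU'' : Continuous (fderiv ℝ (fderiv ℝ U)) :=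
    (hU.fderiv_right (m := 1) (by norm_num)).continuous_fderiv one_ne_zero
  unfold planeLaplacian
  fun_prop

theorem hasDerivAt_ellipseMap (v : E × E) (θ : ℝ) :
    HasDerivAt (ellipseMap v) (ellipseMap (v.2, -v.1) θ) θ := by
  refine (((hasDerivAt_cos θ).smul_const v.1).add
    ((hasDerivAt_sin θ).smul_const v.2)).congr_deriv ?_
  simp only [ellipseMap, neg_smul, smul_neg]
  abel

theorem ellipseMap_neg (v : E × E) (θ : ℝ) : ellipseMap (-v) θ = -ellipseMap v θ := by
  simp only [ellipseMap, Prod.fst_neg, Prod.snd_neg, smul_neg, neg_add]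

theorem ellipseMap_two_pi (v : E × E) : ellipseMap v (2 * π) = ellipseMap v 0 := by
  simp [ellipseMap]

theorem apply_ellipseMap_add_apply_ellipseMap (B : E →L[ℝ] E →L[ℝ] ℝ) (v : E × E) (θ : ℝ) :
    B (ellipseMap v θ) (ellipseMap v θ) + B (ellipseMap (v.2, -v.1) θ) (ellipseMap (v.2, -v.1) θ) =
      B v.1 v.1 + B v.2 v.2 := by
  simp only [ellipseMap, map_add, map_smul, map_neg, add_apply,
    smul_apply, neg_apply, smul_eq_mul]
  linear_combination (B v.1 v.1 + B v.2 v.2) * sin_sq_add_cos_sq θ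

theorem integral_ellipseMap_darboux {g : E → ℝ} (hg : ContDiff ℝ 2 g) (y : E) (v : E × E) (ρ : ℝ) :
    ∫ θ in 0..2 * π, (ρ * fderiv ℝ g (y + ρ • ellipseMap v θ) (ellipseMap v θ) +
      ρ ^ 2 * fderiv ℝ (fderiv ℝ g) (y + ρ • ellipseMap v θ) (ellipseMap v θ) (ellipseMap v θ)) =
    ρ ^ 2 * ∫ θ in 0..2 * π, planeLaplacian g v (y + ρ • ellipseMap v θ) := by
  set e := ellipseMap v
  set e' := ellipseMap (v.2, -v.1)
  have hg' : Continuous (fderiv ℝ g) := hg.continuous_fderiv two_ne_zero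
  have hg'' : Continuous (fderiv ℝ (fderiv ℝ g)) :=
    (hg.fderiv_right (m := 1) (by norm_num)).continuous_fderiv one_ne_zero
  have hΔ := continuous_planeLaplacian hg v
  have hflux (θ : ℝ) : HasDerivAt (fun θ => ρ * fderiv ℝ g (y + ρ • e θ) (e' θ))
      (ρ ^ 2 * fderiv ℝ (fderiv ℝ g) (y + ρ • e θ) (e' θ) (e' θ) -
        ρ * fderiv ℝ g (y + ρ • e θ) (e θ)) θ := by
    have hP := ((hasDerivAt_ellipseMap v θ).const_smul ρ).const_add y
    have he' := hasDerivAt_ellipseMap (v.2, -v.1) θ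
    have := (((hg.fderiv_right (m := 1) (by norm_num)).differentiable one_ne_zero
      _).hasFDerivAt.comp_hasDerivAt θ hP).clm_apply he'
    have hrot : ellipseMap ((v.2, -v.1).2, -(v.2, -v.1).1) θ = -e θ := by
      rw [← ellipseMap_neg]; rfl
    refine (this.const_mul ρ).congr_deriv ?_
    simp only [Function.comp_apply, Pi.smul_apply, hrot, map_smul, map_neg, smul_apply, smul_eq_mul]
    ring
  have hflux_int : ∫ θ in 0..2 * π, (ρ ^ 2 * fderiv ℝ (fderiv ℝ g) (y + ρ • e θ) (e' θ) (e' θ) -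
      ρ * fderiv ℝ g (y + ρ • e θ) (e θ)) = 0 := by
    rw [intervalIntegral.integral_eq_sub_of_hasDerivAt (fun θ _ => hflux θ)
      (Continuous.intervalIntegrable (by fun_prop) _ _)]
    simp [e, e', ellipseMap_two_pi]
  calc _ = ∫ θ in 0..2 * π, (ρ ^ 2 * planeLaplacian g v (y + ρ • e θ) -
        (ρ ^ 2 * fderiv ℝ (fderiv ℝ g) (y + ρ • e θ) (e' θ) (e' θ) -
          ρ * fderiv ℝ g (y + ρ • e θ) (e θ))) := by
        refine intervalIntegral.integral_congr fun θ _ => ?_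
        have := apply_ellipseMap_add_apply_ellipseMap (fderiv ℝ (fderiv ℝ g) (y + ρ • e θ)) v θ
        simp only [planeLaplacian]
        linear_combination ρ ^ 2 * this
    _ = _ := by
        rw [intervalIntegral.integral_sub (Continuous.intervalIntegrable (by fun_prop) _ _)
          (Continuous.intervalIntegrable (by fun_prop) _ _), hflux_int,
          intervalIntegral.integral_const_mul, sub_zero]

end Ellipse

section TwoEllipse

variable {E : Type*} [NormedAddCommGroup E] [NormedSpace ℝ E]

def square : Set (ℝ × ℝ) := Icc 0 (2 * π) ×ˢ Icc 0 (2 * π)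

theorem isCompact_square : IsCompact square := isCompact_Icc.prod isCompact_Icc

theorem integral_square {f : ℝ × ℝ → ℝ} (hf : Continuous f) :
    ∫ z in square, f z = ∫ θ in 0..2 * π, ∫ φ in 0..2 * π, f (θ, φ) := by
  rw [square, Measure.volume_eq_prod, setIntegral_prod f
    (hf.continuousOn.integrableOn_compact isCompact_square)]
  simp only [integral_Icc_eq_integral_Ioc, ← intervalIntegral.integral_of_le two_pi_pos.le]

theorem integral_square_swap {f : ℝ × ℝ → ℝ} (hf : Continuous f) :
    ∫ z in square, f z = ∫ φ in 0..2 * π, ∫ θ in 0..2 * π, f (θ, φ) := by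
  rw [square, Measure.volume_eq_prod, ← setIntegral_prod_swap,
    setIntegral_prod (fun z => f z.swap)
      ((hf.comp continuous_swap).continuousOn.integrableOn_compact isCompact_square)]
  simp only [integral_Icc_eq_integral_Ioc, ← intervalIntegral.integral_of_le two_pi_pos.le]
  rfl

def ellipsePair (v w : E × E) (z : ℝ × ℝ) : ℝ × ℝ →L[ℝ] E :=
  (ContinuousLinearMap.fst ℝ ℝ ℝ).smulRight (ellipseMap v z.1) +
    (ContinuousLinearMap.snd ℝ ℝ ℝ).smulRight (ellipseMap w z.2)

@[simp]
theorem ellipsePair_apply (v w : E × E) (z q : ℝ × ℝ) :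
    ellipsePair v w z q = q.1 • ellipseMap v z.1 + q.2 • ellipseMap w z.2 := rfl

@[fun_prop]
theorem continuous_ellipsePair (v w : E × E) : Continuous (ellipsePair v w) :=
  ((ContinuousLinearMap.smulRightL ℝ (ℝ × ℝ) E (ContinuousLinearMap.fst ℝ ℝ ℝ)).continuous.comp
      ((continuous_ellipseMap v).comp continuous_fst)).add
    ((ContinuousLinearMap.smulRightL ℝ (ℝ × ℝ) E (ContinuousLinearMap.snd ℝ ℝ ℝ)).continuous.comp
      ((continuous_ellipseMap w).comp continuous_snd))

def twoEllipseIntegral (U : E → ℝ) (x : E) (v w : E × E) : ℝ × ℝ → ℝ :=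
  fun q => ∫ z in square, U (x + ellipsePair v w z q)

variable {U : E → ℝ}

theorem contDiff_twoEllipseIntegral (hU : ContDiff ℝ 2 U) (x : E) (v w : E × E) :
    ContDiff ℝ 2 (twoEllipseIntegral U x v w) :=
  contDiff_setIntegral_comp_add isCompact_square hU (continuous_ellipsePair v w) x

theorem partialFst_twoEllipseIntegral (hU : ContDiff ℝ 1 U) (x : E) (v w : E × E) (q : ℝ × ℝ) :
    ∂₁ (twoEllipseIntegral U x v w) q =
      ∫ z in square, fderiv ℝ U (x + ellipsePair v w z q) (ellipseMap v z.1) := by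
  unfold partialFst twoEllipseIntegral
  rw [fderiv_setIntegral_comp_add_apply isCompact_square hU (continuous_ellipsePair v w)]
  simp

theorem partialSnd_twoEllipseIntegral (hU : ContDiff ℝ 1 U) (x : E) (v w : E × E) (q : ℝ × ℝ) :
    ∂₂ (twoEllipseIntegral U x v w) q =
      ∫ z in square, fderiv ℝ U (x + ellipsePair v w z q) (ellipseMap w z.2) := by
  unfold partialSnd twoEllipseIntegral
  rw [fderiv_setIntegral_comp_add_apply isCompact_square hU (continuous_ellipsePair v w)]
  simp

theorem partialFst_partialFst_twoEllipseIntegral (hU : ContDiff ℝ 2 U) (x : E) (v w : E × E)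
    (q : ℝ × ℝ) :
    ∂₁ (∂₁ (twoEllipseIntegral U x v w)) q = ∫ z in square,
      fderiv ℝ (fderiv ℝ U) (x + ellipsePair v w z q) (ellipseMap v z.1) (ellipseMap v z.1) := by
  have hK := contDiff_twoEllipseIntegral hU x v w
  change fderiv ℝ (fun q => fderiv ℝ (twoEllipseIntegral U x v w) q (1, 0)) q (1, 0) = _
  rw [fderiv_fderiv_apply ((hK.fderiv_right le_rfl).differentiable one_ne_zero q)]
  unfold twoEllipseIntegral
  rw [fderiv_fderiv_setIntegral_comp_add_apply isCompact_square hU (continuous_ellipsePair v w)]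
  simp

theorem partialSnd_partialSnd_twoEllipseIntegral (hU : ContDiff ℝ 2 U) (x : E) (v w : E × E)
    (q : ℝ × ℝ) :
    ∂₂ (∂₂ (twoEllipseIntegral U x v w)) q = ∫ z in square,
      fderiv ℝ (fderiv ℝ U) (x + ellipsePair v w z q) (ellipseMap w z.2) (ellipseMap w z.2) := by
  have hK := contDiff_twoEllipseIntegral hU x v w
  change fderiv ℝ (fun q => fderiv ℝ (twoEllipseIntegral U x v w) q (0, 1)) q (0, 1) = _
  rw [fderiv_fderiv_apply ((hK.fderiv_right le_rfl).differentiable one_ne_zero q)]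
  unfold twoEllipseIntegral
  rw [fderiv_fderiv_setIntegral_comp_add_apply isCompact_square hU (continuous_ellipsePair v w)]
  simp

theorem twoEllipseIntegral_darboux_fst (hU : ContDiff ℝ 2 U) (x : E) (v w : E × E) (q : ℝ × ℝ) :
    q.1 * ∂₁ (twoEllipseIntegral U x v w) q + q.1 ^ 2 * ∂₁ (∂₁ (twoEllipseIntegral U x v w)) q =
      q.1 ^ 2 * ∫ z in square, planeLaplacian U v (x + ellipsePair v w z q) := by
  have hU' : Continuous (fderiv ℝ U) := hU.continuous_fderiv two_ne_zero
  have hU'' : Continuous (fderiv ℝ (fderiv ℝ U)) :=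
    (hU.fderiv_right (m := 1) (by norm_num)).continuous_fderiv one_ne_zero
  have hΔ := continuous_planeLaplacian hU v
  rw [partialFst_twoEllipseIntegral (hU.of_le one_le_two),
    partialFst_partialFst_twoEllipseIntegral hU, ← integral_const_mul, ← integral_const_mul,
    ← integral_add ((Continuous.continuousOn (by fun_prop)).integrableOn_compact isCompact_square)
      ((Continuous.continuousOn (by fun_prop)).integrableOn_compact isCompact_square),
    integral_square_swap (by fun_prop), integral_square_swap (by fun_prop),
    ← intervalIntegral.integral_const_mul]
  refine intervalIntegral.integral_congr fun φ _ => ?_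
  have hP (θ : ℝ) :
      x + ellipsePair v w (θ, φ) q = (x + q.2 • ellipseMap w φ) + q.1 • ellipseMap v θ := by
    simp only [ellipsePair_apply]
    abel
  simp only [hP]
  exact integral_ellipseMap_darboux hU _ v q.1

theorem twoEllipseIntegral_darboux_snd (hU : ContDiff ℝ 2 U) (x : E) (v w : E × E) (q : ℝ × ℝ) :
    q.2 * ∂₂ (twoEllipseIntegral U x v w) q + q.2 ^ 2 * ∂₂ (∂₂ (twoEllipseIntegral U x v w)) q =
      q.2 ^ 2 * ∫ z in square, planeLaplacian U w (x + ellipsePair v w z q) := by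
  have hU' : Continuous (fderiv ℝ U) := hU.continuous_fderiv two_ne_zero
  have hU'' : Continuous (fderiv ℝ (fderiv ℝ U)) :=
    (hU.fderiv_right (m := 1) (by norm_num)).continuous_fderiv one_ne_zero
  have hΔ := continuous_planeLaplacian hU w
  rw [partialSnd_twoEllipseIntegral (hU.of_le one_le_two),
    partialSnd_partialSnd_twoEllipseIntegral hU, ← integral_const_mul, ← integral_const_mul,
    ← integral_add ((Continuous.continuousOn (by fun_prop)).integrableOn_compact isCompact_square)
      ((Continuous.continuousOn (by fun_prop)).integrableOn_compact isCompact_square),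
    integral_square (by fun_prop), integral_square (by fun_prop),
    ← intervalIntegral.integral_const_mul]
  refine intervalIntegral.integral_congr fun θ _ => ?_
  simp only [ellipsePair_apply, ← add_assoc]
  exact integral_ellipseMap_darboux hU _ w q.2

theorem solvesEulerPoissonDarboux_twoEllipseIntegral (hU : ContDiff ℝ 2 U) {v w : E × E}
    (hΔ : planeLaplacian U w = planeLaplacian U v) (x : E) :
    SolvesEulerPoissonDarboux (twoEllipseIntegral U x v w) := by
  intro ρ σ hρ hσ
  have hfst := twoEllipseIntegral_darboux_fst hU x v w (ρ, σ)
  have hsnd := twoEllipseIntegral_darboux_snd hU x v w (ρ, σ)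
  rw [hΔ] at hsnd
  refine mul_left_cancel₀ (mul_pos hρ hσ).ne' ?_
  linear_combination σ ^ 2 * hfst - ρ ^ 2 * hsnd

theorem twoEllipseIntegral_mk_zero (hU : Continuous U) (x : E) (v w : E × E) (ρ : ℝ) :
    twoEllipseIntegral U x v w (ρ, 0) = 2 * π * ∫ θ in 0..2 * π, U (x + ρ • ellipseMap v θ) := by
  unfold twoEllipseIntegral
  rw [integral_square (by fun_prop)]
  simp [intervalIntegral.integral_const_mul]

theorem twoEllipseIntegral_zero_mk (hU : Continuous U) (x : E) (v w : E × E) (σ : ℝ) :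
    twoEllipseIntegral U x v w (0, σ) = 2 * π * ∫ φ in 0..2 * π, U (x + σ • ellipseMap w φ) := by
  unfold twoEllipseIntegral
  rw [integral_square_swap (by fun_prop)]
  simp [intervalIntegral.integral_const_mul]

theorem partialSnd_twoEllipseIntegral_mk_zero (hU : ContDiff ℝ 1 U) (x : E) (v w : E × E)
    (ρ : ℝ) : ∂₂ (twoEllipseIntegral U x v w) (ρ, 0) = 0 := by
  have hU' : Continuous (fderiv ℝ U) := hU.continuous_fderiv one_ne_zero
  rw [partialSnd_twoEllipseIntegral hU, integral_square (by fun_prop)]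
  refine (intervalIntegral.integral_congr fun θ _ => ?_).trans intervalIntegral.integral_zero
  simp only [ellipsePair_apply, ellipseMap, map_add, map_smul, smul_eq_mul, zero_smul, add_zero]
  rw [intervalIntegral.integral_add (by apply Continuous.intervalIntegrable; fun_prop)
    (by apply Continuous.intervalIntegrable; fun_prop), intervalIntegral.integral_mul_const,
    intervalIntegral.integral_mul_const]
  simp

theorem integral_ellipseMap_eq_of_planeLaplacian_eq (hU : ContDiff ℝ 2 U) {v w : E × E}
    (hΔ : planeLaplacian U w = planeLaplacian U v) (x : E) {r : ℝ} (hr : 0 ≤ r) :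
    ∫ θ in 0..2 * π, U (x + r • ellipseMap v θ) = ∫ θ in 0..2 * π, U (x + r • ellipseMap w θ) := by
  set K := twoEllipseIntegral U x v w
  set K₀ := twoEllipseIntegral U x v v
  have hK : ContDiff ℝ 2 K := contDiff_twoEllipseIntegral hU x v w
  have hK₀ : ContDiff ℝ 2 K₀ := contDiff_twoEllipseIntegral hU x v v
  have hzero := eqOn_zero_of_solvesEulerPoissonDarboux (D := K - K₀) (hK.sub hK₀)
    ((solvesEulerPoissonDarboux_twoEllipseIntegral hU hΔ x).sub hK hK₀
      (solvesEulerPoissonDarboux_twoEllipseIntegral hU rfl x))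
    (fun ρ => by simp [K, K₀, twoEllipseIntegral_mk_zero hU.continuous])
    (fun ρ => by
      rw [partialSnd_sub (hK.differentiable two_ne_zero) (hK₀.differentiable two_ne_zero),
        Pi.sub_apply, partialSnd_twoEllipseIntegral_mk_zero (hU.of_le one_le_two),
        partialSnd_twoEllipseIntegral_mk_zero (hU.of_le one_le_two), sub_zero])
    (⟨le_refl (0 : ℝ), hr⟩ : ((0 : ℝ), r) ∈ Ici 0 ×ˢ Ici 0)
  simp only [Pi.sub_apply, Pi.zero_apply, sub_eq_zero, K, K₀,
    twoEllipseIntegral_zero_mk hU.continuous] at hzero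
  exact (mul_left_cancel₀ two_pi_pos.ne' hzero).symm

end TwoEllipse

theorem planeLaplacian_eq_of_ultrahyperbolic (u : ℝ → ℝ → ℝ → ℝ → ℝ)
    (hu : ContDiff ℝ 2 (fun p : ℝ × ℝ × ℝ × ℝ => u p.1 p.2.1 p.2.2.1 p.2.2.2))
    (huhe : ∀ x₁ x₂ x₃ x₄ : ℝ,
      deriv (fun t => deriv (fun s => u s x₂ x₃ x₄) t) x₁
      + deriv (fun t => deriv (fun s => u x₁ s x₃ x₄) t) x₂
      - deriv (fun t => deriv (fun s => u x₁ x₂ s x₄) t) x₃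
      - deriv (fun t => deriv (fun s => u x₁ x₂ x₃ s) t) x₄ = 0) :
    planeLaplacian (fun p : ℝ × ℝ × ℝ × ℝ => u p.1 p.2.1 p.2.2.1 p.2.2.2)
        ((0, 0, 1, 0), (0, 0, 0, 1)) =
      planeLaplacian (fun p : ℝ × ℝ × ℝ × ℝ => u p.1 p.2.1 p.2.2.1 p.2.2.2)
        ((1, 0, 0, 0), (0, 1, 0, 0)) := by
  funext ⟨x₁, x₂, x₃, x₄⟩
  have h := huhe x₁ x₂ x₃ x₄
  have hid (t : ℝ) := hasDerivAt_id t
  rw [deriv_deriv_comp_eq_fderiv_fderiv hu (ι := fun s => (s, x₂, x₃, x₄))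
      fun t => (hid t).prodMk (hasDerivAt_const t _),
    deriv_deriv_comp_eq_fderiv_fderiv hu (ι := fun s => (x₁, s, x₃, x₄))
      fun t => (hasDerivAt_const t _).prodMk ((hid t).prodMk (hasDerivAt_const t _)),
    deriv_deriv_comp_eq_fderiv_fderiv hu (ι := fun s => (x₁, x₂, s, x₄))
      fun t => (hasDerivAt_const t _).prodMk
        ((hasDerivAt_const t _).prodMk ((hid t).prodMk (hasDerivAt_const t _))),
    deriv_deriv_comp_eq_fderiv_fderiv hu (ι := fun s => (x₁, x₂, x₃, s))
      fun t => (hasDerivAt_const t _).prodMk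
        ((hasDerivAt_const t _).prodMk ((hasDerivAt_const t _).prodMk (hid t)))] at h
  simp only [planeLaplacian, Prod.mk_zero_zero] at h ⊢
  linarith

end Asgeirsson

end

theorem asgeirsson_mean_value
    (u : ℝ → ℝ → ℝ → ℝ → ℝ)
    (hu : ContDiff ℝ 2 (fun p : ℝ × ℝ × ℝ × ℝ => u p.1 p.2.1 p.2.2.1 p.2.2.2))
    (huhe : ∀ x₁ x₂ x₃ x₄ : ℝ,
      deriv (fun t => deriv (fun s => u s x₂ x₃ x₄) t) x₁
      + deriv (fun t => deriv (fun s => u x₁ s x₃ x₄) t) x₂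
      - deriv (fun t => deriv (fun s => u x₁ x₂ s x₄) t) x₃
      - deriv (fun t => deriv (fun s => u x₁ x₂ x₃ s) t) x₄ = 0)
    (a b c d r : ℝ) (hr : 0 < r) :
    ∫ θ in (0:ℝ)..(2 * Real.pi),
        u (a + r * Real.cos θ) (b + r * Real.sin θ) c d
    = ∫ θ in (0:ℝ)..(2 * Real.pi),
        u a b (c + r * Real.cos θ) (d + r * Real.sin θ) := by
  have h := Asgeirsson.integral_ellipseMap_eq_of_planeLaplacian_eq hu
    (Asgeirsson.planeLaplacian_eq_of_ultrahyperbolic u hu huhe) (a, b, c, d) hr.le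
  simpa [Asgeirsson.ellipseMap] using h
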